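/- Let D be an integral domain such that every upper to zero Q in D[X] contains a nonzero polynomial g with c(g)^v = D, and such that every maximal ideal of D is a t-ideal. Then D is a quasi-Prüfer domain. -/

import Mathlib

/-- The divisorial (`v`-) closure `Iᵛ = (D : (D : I))` of an ideal, as a fractional ideal. -/
noncomputable def vcl (D : Type*) (K : Type*) [CommRing D] [IsDomain D] [Field K]
    [Algebra D K] [IsFractionRing D K] (I : Ideal D) :
    FractionalIdeal (nonZeroDivisors D) K :=
  1 / (1 / (I : FractionalIdeal (nonZeroDivisors D) K))

/-- The content ideal of a polynomial: the ideal generated by its coefficients. -/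
def contentIdeal {D : Type*} [CommRing D] (f : Polynomial D) : Ideal D :=
  Ideal.span {a : D | ∃ n : ℕ, f.coeff n = a}

/-- The content ideal of an ideal of polynomials. -/
def contentIdealOfIdeal {D : Type*} [CommRing D] (J : Ideal (Polynomial D)) : Ideal D :=
  Ideal.span {a : D | ∃ f ∈ J, ∃ n : ℕ, Polynomial.coeff f n = a}

open Polynomial in
lemma contentIdeal_fg {D : Type*} [CommRing D] (g : Polynomial D) : (_root_.contentIdeal g).FG := by
  classical
  refine ⟨(Finset.range (g.natDegree + 2)).image g.coeff, ?_⟩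
  unfold _root_.contentIdeal
  congr 1
  ext a
  simp only [Finset.coe_image, Finset.coe_range, Set.mem_image, Set.mem_Iio, Set.mem_setOf_eq]
  constructor
  · rintro ⟨n, _, rfl⟩; exact ⟨n, rfl⟩
  · rintro ⟨n, rfl⟩
    by_cases h : n < g.natDegree + 2
    · exact ⟨n, h, rfl⟩
    · refine ⟨g.natDegree + 1, by omega, ?_⟩
      have e1 : g.coeff (g.natDegree + 1) = 0 :=
        coeff_eq_zero_of_natDegree_lt (by omega)
      have e2 : g.coeff n = 0 := coeff_eq_zero_of_natDegree_lt (by omega)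
      rw [e1, e2]

open Polynomial in
/-- Key division lemma: if `f ∈ Q` has leading coefficient outside `Q ∩ D`, then any
polynomial that `f` divides up to a nonzero constant lies in `Q`. -/
lemma mem_of_C_mul_eq_mul {D : Type*} [CommRing D] [IsDomain D]
    (Q : Ideal (Polynomial D)) (hQ : Q.IsPrime)
    (f : Polynomial D) (hfQ : f ∈ Q)
    (hlc : f.leadingCoeff ∉ Q.comap (Polynomial.C : D →+* Polynomial D)) :
    ∀ (w : Polynomial D) (s : D) (r : Polynomial D), s ≠ 0 → C s * w = f * r → w ∈ Q := by
  have hf0 : f ≠ 0 := by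
    intro h
    exact hlc (Ideal.mem_comap.mpr (by rw [h, leadingCoeff_zero, map_zero]; exact Q.zero_mem))
  have hCa : C f.leadingCoeff ∉ Q := fun h => hlc (Ideal.mem_comap.mpr h)
  have key : ∀ N (w : Polynomial D) (s : D) (r : Polynomial D), w.natDegree < N → s ≠ 0 →
      C s * w = f * r → w ∈ Q := by
    intro N
    induction N with
    | zero => intro w s r h; exact absurd h (Nat.not_lt_zero _)
    | succ N ih =>
      intro w s r hdeg hs heq
      by_cases hw : w = 0
      · subst hw; exact Q.zero_mem
      have hCs : (C s : Polynomial D) ≠ 0 := by simpa using hs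
      have hr : r ≠ 0 := by
        rintro rfl
        rw [mul_zero] at heq
        exact hw ((mul_eq_zero.mp heq).resolve_left hCs)
      set a := f.leadingCoeff with ha
      set b := w.leadingCoeff with hb
      set m := r.natDegree with hm
      have hN : w.natDegree = f.natDegree + m := by
        have := congrArg natDegree heq
        rwa [natDegree_mul hCs hw, natDegree_mul hf0 hr, natDegree_C, zero_add] at this
      set w₂ := C a * w - C b * (X ^ m * f) with hw₂def
      have hw₂eq : C s * w₂ = f * (C a * r - C (s * b) * X ^ m) := by
        have h1 : C s * w₂ = C a * (C s * w) - C (s * b) * X ^ m * f := by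
          rw [hw₂def, map_mul]; ring
        rw [h1, heq]; ring
      have hcoeff : w₂.coeff w.natDegree = 0 := by
        have h1 : (C a * w).coeff w.natDegree = a * b := by rw [coeff_C_mul, coeff_natDegree]
        have h2 : (C b * (X ^ m * f)).coeff w.natDegree = b * a := by
          rw [coeff_C_mul, hN, coeff_X_pow_mul, coeff_natDegree]
        rw [hw₂def, coeff_sub, h1, h2, mul_comm, sub_self]
      have hmem : C b * (X ^ m * f) ∈ Q := Q.mul_mem_left _ (Q.mul_mem_left _ hfQ)
      have haw : C a * w ∈ Q := by
        by_cases h0 : w₂ = 0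
        · have : C a * w = C b * (X ^ m * f) := by
            have := sub_eq_zero.mp (hw₂def ▸ h0)
            exact this
          rw [this]; exact hmem
        · have hle : w₂.natDegree ≤ w.natDegree := by
            refine le_trans (natDegree_sub_le _ _) (max_le ?_ ?_)
            · exact natDegree_C_mul_le _ _
            · refine le_trans (natDegree_C_mul_le _ _) (le_trans natDegree_mul_le ?_)
              rw [natDegree_X_pow, hN]; omega
          have hlt : w₂.natDegree < w.natDegree := by
            rcases lt_or_eq_of_le hle with h | h
            · exact h
            · exfalso
              apply leadingCoeff_ne_zero.mpr h0
              rw [← coeff_natDegree, h]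
              exact hcoeff
          have hw₂Q : w₂ ∈ Q :=
            ih w₂ s _ (lt_of_lt_of_le hlt (Nat.lt_succ_iff.mp hdeg)) hs hw₂eq
          have : C a * w = w₂ + C b * (X ^ m * f) := by rw [hw₂def]; ring
          rw [this]; exact Q.add_mem hw₂Q hmem
      rcases hQ.mem_or_mem haw with h | h
      · exact absurd h hCa
      · exact h
  intro w s r hs heq
  exact key (w.natDegree + 1) w s r (Nat.lt_succ_self _) hs heq

open Polynomial in
/-- if every upper to zero in `D[X]` contains a nonzero polynomial `g` with
`c(g)ᵛ = D`, and every maximal ideal of `D` is a `t`-ideal, then `D` is quasi-Prüfer. -/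
theorem quasiPruefer_of_UMt_and_maximal_t_ideals
    (D K : Type*) [CommRing D] [IsDomain D] [Field K] [Algebra D K] [IsFractionRing D K]
    (h1 : ∀ Q : Ideal (Polynomial D), Q.IsPrime → Q ≠ ⊥ →
      Q.comap (Polynomial.C : D →+* Polynomial D) = ⊥ →
      ∃ g ∈ Q, g ≠ 0 ∧ vcl D K (_root_.contentIdeal g) = 1)
    (h2 : ∀ M : Ideal D, M.IsMaximal → ∀ F : Ideal D, F ≠ ⊥ → F.FG → F ≤ M →
      vcl D K F ≤ (M : FractionalIdeal (nonZeroDivisors D) K)) :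
    ∀ Q : Ideal (Polynomial D), Q.IsPrime → contentIdealOfIdeal Q ≠ ⊤ →
      Q = Ideal.map (Polynomial.C : D →+* Polynomial D)
        (Q.comap (Polynomial.C : D →+* Polynomial D)) := by
  intro Q hQ hQc
  classical
  set P := Q.comap (Polynomial.C : D →+* Polynomial D) with hP
  refine le_antisymm ?_ Ideal.map_comap_le
  by_contra hcon
  obtain ⟨f₀, hf₀Q, hf₀⟩ := SetLike.not_le_iff_exists.mp hcon
  have hmapP : Ideal.map (Polynomial.C : D →+* Polynomial D) P ≤ Q := Ideal.map_comap_le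
  -- find the largest index with coefficient outside P, and truncate f₀ there
  have hex : ∃ n, f₀.coeff n ∉ P := by
    by_contra h; push_neg at h; exact hf₀ (Ideal.mem_map_C_iff.mpr h)
  obtain ⟨n₀, hn₀⟩ := hex
  have hn₀le : n₀ ≤ f₀.natDegree := by
    by_contra h
    push_neg at h
    exact hn₀ (by rw [coeff_eq_zero_of_natDegree_lt h]; exact P.zero_mem)
  set n := Nat.findGreatest (fun i => f₀.coeff i ∉ P) f₀.natDegree with hn
  have hnP : f₀.coeff n ∉ P := Nat.findGreatest_spec (P := fun i => f₀.coeff i ∉ P) hn₀le hn₀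
  have hgt : ∀ i, n < i → f₀.coeff i ∈ P := by
    intro i hi
    by_cases h : i ≤ f₀.natDegree
    · by_contra hc; exact Nat.findGreatest_is_greatest hi h hc
    · push_neg at h; rw [coeff_eq_zero_of_natDegree_lt h]; exact P.zero_mem
  set f := ∑ i ∈ Finset.range (n + 1), Polynomial.monomial i (f₀.coeff i) with hf
  have hfcoeff : ∀ k, f.coeff k = if k ≤ n then f₀.coeff k else 0 := by
    intro k
    rw [hf, finset_sum_coeff]
    simp only [coeff_monomial]
    rw [Finset.sum_ite_eq' (Finset.range (n + 1)) k (fun i => f₀.coeff i)]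
    simp [Finset.mem_range, Nat.lt_succ_iff]
  have hsub : f₀ - f ∈ Ideal.map (Polynomial.C : D →+* Polynomial D) P := by
    rw [Ideal.mem_map_C_iff]
    intro k
    rw [coeff_sub, hfcoeff]
    split_ifs with h
    · rw [sub_self]; exact P.zero_mem
    · push_neg at h; rw [sub_zero]; exact hgt k h
  have hfQ : f ∈ Q := by
    have h := Q.sub_mem hf₀Q (hmapP hsub)
    rwa [sub_sub_cancel] at h
  have hfn : f.coeff n = f₀.coeff n := by rw [hfcoeff]; simp
  have hf0 : f ≠ 0 := by
    intro h
    exact hnP (by rw [← hfn, h, coeff_zero]; exact P.zero_mem)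
  have hfdeg : f.natDegree = n := by
    have h1 : f.natDegree ≤ n :=
      natDegree_le_iff_coeff_eq_zero.mpr fun m hm => by rw [hfcoeff, if_neg (by omega)]
    have h2 : n ≤ f.natDegree := by
      refine le_natDegree_of_ne_zero ?_
      rw [hfn]
      exact fun h => hnP (h ▸ P.zero_mem)
    omega
  have hlc : f.leadingCoeff ∉ P := by
    rw [← coeff_natDegree, hfdeg, hfn]
    exact hnP
  have key : ∀ (w : Polynomial D) (s : D) (r : Polynomial D), s ≠ 0 → C s * w = f * r → w ∈ Q :=
    mem_of_C_mul_eq_mul Q hQ f hfQ hlc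
  have hone : (1 : Polynomial D) ∉ Q := (Ideal.ne_top_iff_one Q).mp hQ.ne_top
  -- the multiplicative set of nonzero constants times polynomials outside Q
  set T : Submonoid (Polynomial D) :=
    { carrier := {x | ∃ s : D, s ≠ 0 ∧ ∃ h ∉ Q, x = Polynomial.C s * h}
      one_mem' := ⟨1, one_ne_zero, 1, hone, by simp⟩
      mul_mem' := by
        rintro x y ⟨s, hs, h, hh, rfl⟩ ⟨t, ht, k, hk, rfl⟩
        refine ⟨s * t, mul_ne_zero hs ht, h * k, ?_, by rw [map_mul]; ring⟩
        intro hm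
        rcases hQ.mem_or_mem hm with h' | h'
        · exact hh h'
        · exact hk h' } with hT
  have hdisj : Disjoint ((Ideal.span {f} : Ideal (Polynomial D)) : Set (Polynomial D)) (T : Set (Polynomial D)) := by
    rw [Set.disjoint_left]
    rintro x hx ⟨s, hs, h, hh, rfl⟩
    obtain ⟨r, hr⟩ := Ideal.mem_span_singleton.mp hx
    exact hh (key h s r hs hr)
  obtain ⟨W, hWprime, hWle, hWdisj⟩ := Ideal.exists_le_prime_disjoint (Ideal.span {f}) T hdisj
  have hfW : f ∈ W := hWle (Ideal.subset_span rfl)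
  have hWbot : W ≠ ⊥ := by
    intro h
    rw [h] at hfW
    exact hf0 (Ideal.mem_bot.mp hfW)
  have hWQ : ∀ x ∈ W, x ∈ Q := by
    intro x hx
    by_contra hxQ
    exact Set.disjoint_left.mp hWdisj hx ⟨1, one_ne_zero, x, hxQ, by simp⟩
  have hWcomap : W.comap (Polynomial.C : D →+* Polynomial D) = ⊥ := by
    rw [eq_bot_iff]
    intro a ha
    rw [Ideal.mem_comap] at ha
    rw [Ideal.mem_bot]
    by_contra ha0
    exact Set.disjoint_left.mp hWdisj ha ⟨a, ha0, 1, hone, by simp⟩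
  obtain ⟨g, hgW, hg0, hvcl⟩ := h1 W hWprime hWbot hWcomap
  have hcg : _root_.contentIdeal g = ⊤ := by
    by_contra hne
    obtain ⟨M, hM, hle⟩ := Ideal.exists_le_maximal _ hne
    have hbot : _root_.contentIdeal g ≠ ⊥ := by
      intro hb
      refine hg0 (Polynomial.ext fun k => ?_)
      have hk : g.coeff k ∈ _root_.contentIdeal g := Ideal.subset_span ⟨k, rfl⟩
      rw [hb] at hk
      simpa using hk
    have hle' := h2 M hM _ hbot (contentIdeal_fg g) hle
    rw [hvcl, ← FractionalIdeal.coeIdeal_top] at hle'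
    exact hM.ne_top (top_le_iff.mp ((FractionalIdeal.coeIdeal_le_coeIdeal K).mp hle'))
  have hgQ : g ∈ Q := hWQ g hgW
  have hone' : (1 : D) ∈ contentIdealOfIdeal Q := by
    have h1' : (1 : D) ∈ _root_.contentIdeal g := hcg ▸ Submodule.mem_top
    refine Ideal.span_mono ?_ h1'
    rintro a ⟨k, rfl⟩
    exact ⟨g, hgQ, k, rfl⟩
  exact hQc ((Ideal.eq_top_iff_one _).mpr hone')
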